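/- (Optimal value identity relating the two problems of Theorem 1.) The infimum of F(u,w,ρ̂,ρ) over the feasible set {u_{l,k} ∈ ℝ, w_{l,k} > 0, 0 ≤ ρ̂_{l,k} ≤ √P, 0 ≤ ρ_{l,k} ≤ √P} equals L·K − ln(2) · S*, where S* is the maximum of Σ_{l=1}^L Σ_{k=1}^K log₂(1 + SINR_{l,k}(p,p̂)) over {(p,p̂) : 0 ≤ p_{l,k} ≤ P, 0 ≤ p̂_{l,k} ≤ P for all l,k}. -/

import Mathlib

open Finset

/-- Interference-plus-noise term `D_{l,k}(p, p̂)`.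
`β l i t` denotes `β_{i,t}^l` (large-scale fading from user `t` in cell `i` to BS `l`). -/
noncomputable def Dterm (L K M : ℕ) (β : Fin L → Fin L → Fin K → ℝ) (σ2 : ℝ)
    (p phat : Fin L → Fin K → ℝ) (l : Fin L) (k : Fin K) : ℝ :=
  (M : ℝ) * K * ∑ i ∈ Finset.univ.erase l, p i k * phat i k * β l i k ^ 2
    + ((K : ℝ) * ∑ i, phat i k * β l i k + σ2) * ((∑ i, ∑ t, p i t * β l i t) + σ2)

/-- Effective SINR of user `k` in cell `l`. -/
noncomputable def SINR (L K M : ℕ) (β : Fin L → Fin L → Fin K → ℝ) (σ2 : ℝ)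
    (p phat : Fin L → Fin K → ℝ) (l : Fin L) (k : Fin K) : ℝ :=
  (M : ℝ) * K * p l k * phat l k * β l l k ^ 2 / Dterm L K M β σ2 p phat l k

/-- Mean square error `e_{l,k}(u, ρ̂, ρ)` of the auxiliary SISO system. -/
noncomputable def eMSE (L K M : ℕ) (β : Fin L → Fin L → Fin K → ℝ) (σ2 : ℝ)
    (u ρhat ρ : Fin L → Fin K → ℝ) (l : Fin L) (k : Fin K) : ℝ :=
  (M : ℝ) * K * u l k ^ 2 * ∑ i, ρ i k ^ 2 * ρhat i k ^ 2 * β l i k ^ 2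
    - 2 * Real.sqrt ((M : ℝ) * K) * ρ l k * ρhat l k * u l k * β l l k
    + u l k ^ 2 * ((K : ℝ) * ∑ i, ρhat i k ^ 2 * β l i k + σ2)
        * ((∑ i, ∑ t, ρ i t ^ 2 * β l i t) + σ2) + 1

/-- The quantity `ũ_{l,k}(ρ̂, ρ)`. -/
noncomputable def utilde (L K M : ℕ) (β : Fin L → Fin L → Fin K → ℝ) (σ2 : ℝ)
    (ρhat ρ : Fin L → Fin K → ℝ) (l : Fin L) (k : Fin K) : ℝ :=
  (M : ℝ) * K * ∑ i, ρ i k ^ 2 * ρhat i k ^ 2 * β l i k ^ 2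
    + ((K : ℝ) * ∑ i, ρhat i k ^ 2 * β l i k + σ2)
        * ((∑ i, ∑ t, ρ i t ^ 2 * β l i t) + σ2)

/-- The weighted-MMSE objective `F(u, w, ρ̂, ρ) = Σ_{l,k} (w_{l,k} e_{l,k} − ln w_{l,k})`. -/
noncomputable def Fobj (L K M : ℕ) (β : Fin L → Fin L → Fin K → ℝ) (σ2 : ℝ)
    (u w ρhat ρ : Fin L → Fin K → ℝ) : ℝ :=
  ∑ l, ∑ k, (w l k * eMSE L K M β σ2 u ρhat ρ l k - Real.log (w l k))

/-- Update the `(l,k)` entry of a doubly-indexed vector to the value `x`. -/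
noncomputable def updLK {L K : ℕ} (f : Fin L → Fin K → ℝ) (l : Fin L) (k : Fin K)
    (x : ℝ) : Fin L → Fin K → ℝ :=
  Function.update f l (Function.update (f l) k x)

lemma Dpos (L K M : ℕ) (β : Fin L → Fin L → Fin K → ℝ) (hβ : ∀ l i t, 0 < β l i t)
    (σ2 : ℝ) (hσ : 0 < σ2) (p phat : Fin L → Fin K → ℝ)
    (hp : ∀ i t, 0 ≤ p i t) (hphat : ∀ i t, 0 ≤ phat i t) (l : Fin L) (k : Fin K) :
    0 < Dterm L K M β σ2 p phat l k := by
  unfold Dterm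
  have h1 : 0 ≤ (M:ℝ) * K * ∑ i ∈ Finset.univ.erase l, p i k * phat i k * β l i k ^ 2 := by
    apply mul_nonneg (by positivity)
    exact Finset.sum_nonneg fun i _ => by
      have h := hp i k; have h' := hphat i k; positivity
  have h2 : 0 < (K:ℝ) * ∑ i, phat i k * β l i k + σ2 := by
    have : (0:ℝ) ≤ (K:ℝ) * ∑ i, phat i k * β l i k := by
      apply mul_nonneg (by positivity)
      exact Finset.sum_nonneg fun i _ => mul_nonneg (hphat i k) (hβ l i k).le
    linarith
  have h3 : 0 < (∑ i, ∑ t, p i t * β l i t) + σ2 := by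
    have : (0:ℝ) ≤ ∑ i, ∑ t, p i t * β l i t :=
      Finset.sum_nonneg fun i _ => Finset.sum_nonneg fun t _ =>
        mul_nonneg (hp i t) (hβ l i t).le
    linarith
  nlinarith [mul_pos h2 h3]

lemma utilde_eq (L K M : ℕ) (β : Fin L → Fin L → Fin K → ℝ) (σ2 : ℝ)
    (ρhat ρ : Fin L → Fin K → ℝ) (l : Fin L) (k : Fin K) :
    utilde L K M β σ2 ρhat ρ l k
      = Dterm L K M β σ2 (fun i t => ρ i t ^ 2) (fun i t => ρhat i t ^ 2) l k
        + (M:ℝ) * K * (ρ l k ^ 2 * ρhat l k ^ 2 * β l l k ^ 2) := by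
  unfold utilde Dterm
  rw [show (∑ i, ρ i k ^ 2 * ρhat i k ^ 2 * β l i k ^ 2)
      = (∑ i ∈ Finset.univ.erase l, ρ i k ^ 2 * ρhat i k ^ 2 * β l i k ^ 2)
        + ρ l k ^ 2 * ρhat l k ^ 2 * β l l k ^ 2 from
    (Finset.sum_erase_add _ _ (Finset.mem_univ l)).symm]
  ring

lemma utilde_pos (L K M : ℕ) (β : Fin L → Fin L → Fin K → ℝ) (hβ : ∀ l i t, 0 < β l i t)
    (σ2 : ℝ) (hσ : 0 < σ2) (ρhat ρ : Fin L → Fin K → ℝ) (l : Fin L) (k : Fin K) :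
    0 < utilde L K M β σ2 ρhat ρ l k := by
  rw [utilde_eq]
  have hD := Dpos L K M β hβ σ2 hσ _ _ (fun i t => sq_nonneg (ρ i t))
    (fun i t => sq_nonneg (ρhat i t)) l k
  have h : (0:ℝ) ≤ (M:ℝ) * K * (ρ l k ^ 2 * ρhat l k ^ 2 * β l l k ^ 2) := by positivity
  linarith

lemma one_add_SINR (L K M : ℕ) (β : Fin L → Fin L → Fin K → ℝ) (hβ : ∀ l i t, 0 < β l i t)
    (σ2 : ℝ) (hσ : 0 < σ2) (ρhat ρ : Fin L → Fin K → ℝ) (l : Fin L) (k : Fin K) :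
    1 + SINR L K M β σ2 (fun i t => ρ i t ^ 2) (fun i t => ρhat i t ^ 2) l k
      = utilde L K M β σ2 ρhat ρ l k
        / Dterm L K M β σ2 (fun i t => ρ i t ^ 2) (fun i t => ρhat i t ^ 2) l k := by
  have hD := Dpos L K M β hβ σ2 hσ _ _ (fun i t => sq_nonneg (ρ i t))
    (fun i t => sq_nonneg (ρhat i t)) l k
  rw [utilde_eq]
  unfold SINR
  field_simp

lemma eMSE_expand (L K M : ℕ) (β : Fin L → Fin L → Fin K → ℝ) (σ2 : ℝ)
    (u ρhat ρ : Fin L → Fin K → ℝ) (l : Fin L) (k : Fin K) :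
    eMSE L K M β σ2 u ρhat ρ l k
      = utilde L K M β σ2 ρhat ρ l k * u l k ^ 2
        - 2 * (Real.sqrt ((M:ℝ) * K) * ρ l k * ρhat l k * β l l k) * u l k + 1 := by
  unfold eMSE utilde; ring

lemma sq_b (L K M : ℕ) (β : Fin L → Fin L → Fin K → ℝ) (ρhat ρ : Fin L → Fin K → ℝ)
    (l : Fin L) (k : Fin K) :
    (Real.sqrt ((M:ℝ) * K) * ρ l k * ρhat l k * β l l k) ^ 2
      = (M:ℝ) * K * (ρ l k ^ 2 * ρhat l k ^ 2 * β l l k ^ 2) := by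
  have h : Real.sqrt ((M:ℝ) * K) ^ 2 = (M:ℝ) * K :=
    Real.sq_sqrt (by positivity)
  calc (Real.sqrt ((M:ℝ) * K) * ρ l k * ρhat l k * β l l k) ^ 2
      = Real.sqrt ((M:ℝ) * K) ^ 2 * (ρ l k ^ 2 * ρhat l k ^ 2 * β l l k ^ 2) := by ring
    _ = _ := by rw [h]

lemma term_lb (L K M : ℕ) (β : Fin L → Fin L → Fin K → ℝ) (hβ : ∀ l i t, 0 < β l i t)
    (σ2 : ℝ) (hσ : 0 < σ2) (u w ρhat ρ : Fin L → Fin K → ℝ) (l : Fin L) (k : Fin K)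
    (hw : 0 < w l k) :
    1 - Real.log (1 + SINR L K M β σ2 (fun i t => ρ i t ^ 2) (fun i t => ρhat i t ^ 2) l k)
      ≤ w l k * eMSE L K M β σ2 u ρhat ρ l k - Real.log (w l k) := by
  have hD := Dpos L K M β hβ σ2 hσ _ _ (fun i t => sq_nonneg (ρ i t))
    (fun i t => sq_nonneg (ρhat i t)) l k
  have hU := utilde_pos L K M β hβ σ2 hσ ρhat ρ l k
  set b : ℝ := Real.sqrt ((M:ℝ) * K) * ρ l k * ρhat l k * β l l k with hbdef
  set U : ℝ := utilde L K M β σ2 ρhat ρ l k with hUdef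
  set D : ℝ := Dterm L K M β σ2 (fun i t => ρ i t ^ 2) (fun i t => ρhat i t ^ 2) l k with hDdef
  have hUD : U = D + b ^ 2 := by
    rw [hUdef, hDdef, hbdef, sq_b, utilde_eq]
  have he : eMSE L K M β σ2 u ρhat ρ l k = U * u l k ^ 2 - 2 * b * u l k + 1 :=
    eMSE_expand L K M β σ2 u ρhat ρ l k
  have heD : D / U ≤ eMSE L K M β σ2 u ρhat ρ l k := by
    rw [div_le_iff₀ hU, he]
    nlinarith [sq_nonneg (U * u l k - b)]
  have hepos : 0 < eMSE L K M β σ2 u ρhat ρ l k :=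
    lt_of_lt_of_le (div_pos hD hU) heD
  have hlog : Real.log (w l k * eMSE L K M β σ2 u ρhat ρ l k)
      ≤ w l k * eMSE L K M β σ2 u ρhat ρ l k - 1 :=
    Real.log_le_sub_one_of_pos (mul_pos hw hepos)
  rw [Real.log_mul hw.ne' hepos.ne'] at hlog
  have hloge : Real.log (D / U) ≤ Real.log (eMSE L K M β σ2 u ρhat ρ l k) :=
    Real.log_le_log (div_pos hD hU) heD
  rw [one_add_SINR L K M β hβ σ2 hσ, ← hUdef, ← hDdef]
  have hlogUD : Real.log (U / D) = - Real.log (D / U) := by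
    rw [Real.log_div hU.ne' hD.ne', Real.log_div hD.ne' hU.ne']; ring
  rw [hlogUD]
  linarith

lemma quad_min (U D b : ℝ) (hU : U ≠ 0) (hUD : U = D + b ^ 2) :
    U * (b / U) ^ 2 - 2 * b * (b / U) + 1 = D / U := by
  field_simp
  linear_combination hUD

lemma term_eq (L K M : ℕ) (β : Fin L → Fin L → Fin K → ℝ) (hβ : ∀ l i t, 0 < β l i t)
    (σ2 : ℝ) (hσ : 0 < σ2) (u ρhat ρ : Fin L → Fin K → ℝ) (l : Fin L) (k : Fin K)
    (hu : u l k = Real.sqrt ((M:ℝ) * K) * ρ l k * ρhat l k * β l l k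
        / utilde L K M β σ2 ρhat ρ l k) :
    (utilde L K M β σ2 ρhat ρ l k
        / Dterm L K M β σ2 (fun i t => ρ i t ^ 2) (fun i t => ρhat i t ^ 2) l k)
      * eMSE L K M β σ2 u ρhat ρ l k
    - Real.log (utilde L K M β σ2 ρhat ρ l k
        / Dterm L K M β σ2 (fun i t => ρ i t ^ 2) (fun i t => ρhat i t ^ 2) l k)
    = 1 - Real.log (1 + SINR L K M β σ2 (fun i t => ρ i t ^ 2)
        (fun i t => ρhat i t ^ 2) l k) := by
  have hD := Dpos L K M β hβ σ2 hσ _ _ (fun i t => sq_nonneg (ρ i t))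
    (fun i t => sq_nonneg (ρhat i t)) l k
  have hU := utilde_pos L K M β hβ σ2 hσ ρhat ρ l k
  set b : ℝ := Real.sqrt ((M:ℝ) * K) * ρ l k * ρhat l k * β l l k with hbdef
  set U : ℝ := utilde L K M β σ2 ρhat ρ l k with hUdef
  set D : ℝ := Dterm L K M β σ2 (fun i t => ρ i t ^ 2) (fun i t => ρhat i t ^ 2) l k with hDdef
  have hUD : U = D + b ^ 2 := by
    rw [hUdef, hDdef, hbdef, sq_b, utilde_eq]
  have he : eMSE L K M β σ2 u ρhat ρ l k = D / U := by
    rw [eMSE_expand, hu]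
    exact quad_min U D b hU.ne' hUD
  rw [he, one_add_SINR L K M β hβ σ2 hσ, ← hUdef, ← hDdef]
  have h1 : U / D * (D / U) = 1 := by field_simp
  rw [h1]

lemma sum_one_sub {L K : ℕ} (g : Fin L → Fin K → ℝ) :
    ∑ l, ∑ k, ((1:ℝ) - g l k) = (L:ℝ) * K - ∑ l, ∑ k, g l k := by
  have h : ∀ l, ∑ k, ((1:ℝ) - g l k) = (K:ℝ) - ∑ k, g l k := fun l => by
    rw [Finset.sum_sub_distrib]; simp [Finset.card_univ]
  rw [Finset.sum_congr rfl fun l _ => h l, Finset.sum_sub_distrib]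
  simp [Finset.card_univ]

lemma sum_log_eq {L K : ℕ} (x : Fin L → Fin K → ℝ) :
    ∑ l, ∑ k, Real.log (x l k) = Real.log 2 * ∑ l, ∑ k, Real.logb 2 (x l k) := by
  have hln2 : Real.log 2 ≠ 0 := (Real.log_pos (by norm_num)).ne'
  rw [Finset.mul_sum]
  refine Finset.sum_congr rfl fun l _ => ?_
  rw [Finset.mul_sum]
  refine Finset.sum_congr rfl fun k _ => ?_
  rw [Real.logb]; field_simp

/-- the optimal value identity `inf F = LK − ln(2)·S*`, where `S*` is the
maximum sum spectral efficiency. -/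
theorem stmt_10 (L K M : ℕ) (hL : 0 < L) (hK : 0 < K) (hM : 0 < M)
    (β : Fin L → Fin L → Fin K → ℝ) (hβ : ∀ l i t, 0 < β l i t)
    (σ2 : ℝ) (hσ : 0 < σ2) (P : ℝ) (hP : 0 < P)
    (Sstar : ℝ)
    (hS : IsGreatest {s : ℝ | ∃ p phat : Fin L → Fin K → ℝ,
      (∀ l k, p l k ∈ Set.Icc 0 P) ∧ (∀ l k, phat l k ∈ Set.Icc 0 P) ∧
      s = ∑ l, ∑ k, Real.logb 2 (1 + SINR L K M β σ2 p phat l k)} Sstar) :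
    sInf {y : ℝ | ∃ u w ρhat ρ : Fin L → Fin K → ℝ,
      (∀ l k, 0 < w l k) ∧ (∀ l k, ρhat l k ∈ Set.Icc 0 (Real.sqrt P)) ∧
      (∀ l k, ρ l k ∈ Set.Icc 0 (Real.sqrt P)) ∧
      y = Fobj L K M β σ2 u w ρhat ρ} = (L : ℝ) * K - Real.log 2 * Sstar := by
  have hln2 : (0:ℝ) < Real.log 2 := Real.log_pos (by norm_num)
  -- squares of [0, √P] entries lie in [0, P]
  have hsq : ∀ (ρ : Fin L → Fin K → ℝ), (∀ l k, ρ l k ∈ Set.Icc 0 (Real.sqrt P)) →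
      ∀ l k, ρ l k ^ 2 ∈ Set.Icc 0 P := by
    intro ρ h l k
    refine ⟨sq_nonneg _, ?_⟩
    calc ρ l k ^ 2 ≤ Real.sqrt P ^ 2 := pow_le_pow_left₀ (h l k).1 (h l k).2 2
      _ = P := Real.sq_sqrt hP.le
  -- the lower bound
  have hlb : ∀ y ∈ {y : ℝ | ∃ u w ρhat ρ : Fin L → Fin K → ℝ,
      (∀ l k, 0 < w l k) ∧ (∀ l k, ρhat l k ∈ Set.Icc 0 (Real.sqrt P)) ∧
      (∀ l k, ρ l k ∈ Set.Icc 0 (Real.sqrt P)) ∧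
      y = Fobj L K M β σ2 u w ρhat ρ},
      (L : ℝ) * K - Real.log 2 * Sstar ≤ y := by
    rintro y ⟨u, w, ρhat, ρ, hw, hρhat, hρ, rfl⟩
    have hSle : ∑ l, ∑ k, Real.logb 2 (1 + SINR L K M β σ2 (fun i t => ρ i t ^ 2)
        (fun i t => ρhat i t ^ 2) l k) ≤ Sstar :=
      hS.2 ⟨fun i t => ρ i t ^ 2, fun i t => ρhat i t ^ 2,
        fun l k => hsq ρ hρ l k, fun l k => hsq ρhat hρhat l k, rfl⟩
    calc (L : ℝ) * K - Real.log 2 * Sstar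
        ≤ (L : ℝ) * K - Real.log 2 * ∑ l, ∑ k, Real.logb 2 (1 + SINR L K M β σ2
            (fun i t => ρ i t ^ 2) (fun i t => ρhat i t ^ 2) l k) := by
          have := mul_le_mul_of_nonneg_left hSle hln2.le
          linarith
      _ = ∑ l, ∑ k, ((1:ℝ) - Real.log (1 + SINR L K M β σ2
            (fun i t => ρ i t ^ 2) (fun i t => ρhat i t ^ 2) l k)) := by
          rw [sum_one_sub, sum_log_eq]
      _ ≤ Fobj L K M β σ2 u w ρhat ρ :=
          Finset.sum_le_sum fun l _ => Finset.sum_le_sum fun k _ =>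
            term_lb L K M β hβ σ2 hσ u w ρhat ρ l k (hw l k)
  -- the value is attained
  obtain ⟨⟨p, phat, hp, hphat, hsval⟩, -⟩ := hS
  set ρ : Fin L → Fin K → ℝ := fun l k => Real.sqrt (p l k) with hρdef
  set ρhat : Fin L → Fin K → ℝ := fun l k => Real.sqrt (phat l k) with hρhatdef
  have hρ2 : (fun (i : Fin L) (t : Fin K) => ρ i t ^ 2) = p :=
    funext fun i => funext fun t => Real.sq_sqrt (hp i t).1
  have hρhat2 : (fun (i : Fin L) (t : Fin K) => ρhat i t ^ 2) = phat :=
    funext fun i => funext fun t => Real.sq_sqrt (hphat i t).1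
  have hmem : (L : ℝ) * K - Real.log 2 * Sstar ∈ {y : ℝ | ∃ u w ρhat ρ : Fin L → Fin K → ℝ,
      (∀ l k, 0 < w l k) ∧ (∀ l k, ρhat l k ∈ Set.Icc 0 (Real.sqrt P)) ∧
      (∀ l k, ρ l k ∈ Set.Icc 0 (Real.sqrt P)) ∧
      y = Fobj L K M β σ2 u w ρhat ρ} := by
    refine ⟨fun l k => Real.sqrt ((M:ℝ) * K) * ρ l k * ρhat l k * β l l k
        / utilde L K M β σ2 ρhat ρ l k,
      fun l k => utilde L K M β σ2 ρhat ρ l k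
        / Dterm L K M β σ2 (fun i t => ρ i t ^ 2) (fun i t => ρhat i t ^ 2) l k,
      ρhat, ρ, fun l k => ?_, fun l k => ?_, fun l k => ?_, ?_⟩
    · exact div_pos (utilde_pos L K M β hβ σ2 hσ ρhat ρ l k)
        (Dpos L K M β hβ σ2 hσ _ _ (fun i t => sq_nonneg _) (fun i t => sq_nonneg _) l k)
    · exact ⟨Real.sqrt_nonneg _, Real.sqrt_le_sqrt (hphat l k).2⟩
    · exact ⟨Real.sqrt_nonneg _, Real.sqrt_le_sqrt (hp l k).2⟩
    · have hF : Fobj L K M β σ2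
          (fun l k => Real.sqrt ((M:ℝ) * K) * ρ l k * ρhat l k * β l l k
            / utilde L K M β σ2 ρhat ρ l k)
          (fun l k => utilde L K M β σ2 ρhat ρ l k
            / Dterm L K M β σ2 (fun i t => ρ i t ^ 2) (fun i t => ρhat i t ^ 2) l k)
          ρhat ρ
          = ∑ l, ∑ k, ((1:ℝ) - Real.log (1 + SINR L K M β σ2
              (fun i t => ρ i t ^ 2) (fun i t => ρhat i t ^ 2) l k)) := by
        refine Finset.sum_congr rfl fun l _ => Finset.sum_congr rfl fun k _ => ?_
        exact term_eq L K M β hβ σ2 hσ _ ρhat ρ l k rfl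
      rw [hF, sum_one_sub, sum_log_eq, hρ2, hρhat2, ← hsval]
  exact le_antisymm (csInf_le ⟨_, hlb⟩ hmem) (le_csInf ⟨_, hmem⟩ hlb)
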